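/- Let {G_{N,n} : N, n ∈ ℕ} be random functions from ℝ to ℝ that are nondecreasing in t, let {g_N} be deterministic real functions, and let g : ℝ → ℝ be continuous. Suppose that (a) for every N and every t ∈ ℝ, G_{N,n}(t) − g_N(t) → 0 in probability as n → ∞, and (b) for every t ∈ ℝ, g_N(t) → g(t) as N → ∞. Then there exists a nondecreasing sequence of natural numbers N_n with N_n → ∞ such that for every t ∈ ℝ, G_{N_n,n}(t) → g(t) in probability as n → ∞. -/

import Mathlib

open MeasureTheory ProbabilityTheory Filter Finset

noncomputable section

/-- The standard normal distribution function `Φ`. -/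
def stdNormCDF (t : ℝ) : ℝ := (ProbabilityTheory.gaussianReal 0 1 (Set.Iic t)).toReal

/-- Sample mean of the first `n` entries of a data sequence (data indexed from 0). -/
def sampleMean (n : ℕ) (x : ℕ → ℝ) : ℝ := (∑ i ∈ Finset.range n, x i) / n

/-- Sample first-order autocorrelation `ρ̂_n` of the first `n` entries. -/
def rhoHat (n : ℕ) (x : ℕ → ℝ) : ℝ :=
  (∑ i ∈ Finset.range (n - 1), (x i - sampleMean n x) * (x (i + 1) - sampleMean n x)) /
    ∑ i ∈ Finset.range n, (x i - sampleMean n x) ^ 2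

/-- Sample lag-`k` autocorrelation. -/
def rhoHatLag (n k : ℕ) (x : ℕ → ℝ) : ℝ :=
  (∑ i ∈ Finset.range (n - k), (x i - sampleMean n x) * (x (i + k) - sampleMean n x)) /
    ∑ i ∈ Finset.range n, (x i - sampleMean n x) ^ 2

/-- The data vector permuted by `π`: entry `i < n` is `x (π i)`. -/
def permute (n : ℕ) (π : Equiv.Perm (Fin n)) (x : ℕ → ℝ) : ℕ → ℝ :=
  fun i => if h : i < n then x (π ⟨i, h⟩) else 0

/-- The permutation distribution `R̂_n(t)` of a statistic `T` at data `x`. -/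
def permDist (n : ℕ) (T : (ℕ → ℝ) → ℝ) (x : ℕ → ℝ) (t : ℝ) : ℝ :=
  (∑ π : Equiv.Perm (Fin n), if T (permute n π x) ≤ t then (1 : ℝ) else 0) /
    (Nat.factorial n : ℝ)

/-- The statistic `√n ρ̂_n`. -/
def statRho (n : ℕ) : (ℕ → ℝ) → ℝ := fun x => Real.sqrt n * rhoHat n x

/-- Convergence in probability to a constant. -/
def TendstoInProbability {Ω : Type*} [MeasurableSpace Ω] (P : Measure Ω)
    (Z : ℕ → Ω → ℝ) (c : ℝ) : Prop :=
  ∀ ε : ℝ, 0 < ε →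
    Filter.Tendsto (fun n => P {ω | ε ≤ |Z n ω - c|}) Filter.atTop (nhds 0)

/-- Convergence in distribution: convergence of CDFs at continuity points of the limit CDF. -/
def TendstoInDistribution {Ω : Type*} [MeasurableSpace Ω] (P : Measure Ω)
    (W : ℕ → Ω → ℝ) (ν : Measure ℝ) : Prop :=
  ∀ t : ℝ, ContinuousAt (fun s => (ν (Set.Iic s)).toReal) t →
    Filter.Tendsto (fun n => (P {ω | W n ω ≤ t}).toReal) Filter.atTop
      (nhds ((ν (Set.Iic t)).toReal))

/-- Strict stationarity of a one-sided sequence. -/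
def StrictlyStationary {Ω : Type*} [MeasurableSpace Ω] (P : Measure Ω) (X : ℕ → Ω → ℝ) : Prop :=
  ∀ k : ℕ,
    Measure.map (fun ω => fun i : ℕ => X (i + k) ω) P =
      Measure.map (fun ω => fun i : ℕ => X i ω) P

/-- `m`-dependence: the first `k` variables are independent of `(X_{k+m}, X_{k+m+1}, …)`
(0-based indexing). -/
def MDependent {Ω : Type*} [MeasurableSpace Ω] (P : Measure Ω) (X : ℕ → Ω → ℝ) (m : ℕ) : Prop :=
  ∀ k : ℕ,
    IndepFun (fun ω => fun i : Fin k => X i ω) (fun ω => fun i : ℕ => X (k + m + i) ω) P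

/-- α-mixing coefficients of a one-sided sequence (0-based indexing): past is
`σ(X_0, …, X_k)`, future is `σ(X_j : j ≥ k + n)`. -/
def alphaMix {Ω : Type*} [MeasurableSpace Ω] (P : Measure Ω) (X : ℕ → Ω → ℝ) (n : ℕ) : ℝ :=
  sSup {x : ℝ | ∃ (k : ℕ) (A B : Set Ω),
    MeasurableSet[MeasurableSpace.comap (fun ω => fun i : Fin (k + 1) => X i ω) inferInstance] A ∧
    MeasurableSet[MeasurableSpace.comap (fun ω => fun i : ℕ => X (k + n + i) ω) inferInstance] B ∧
    x = |(P (A ∩ B)).toReal - (P A).toReal * (P B).toReal|}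

/-- Covariance of two real random variables. -/
def covar {Ω : Type*} [MeasurableSpace Ω] (P : Measure Ω) (f g : Ω → ℝ) : ℝ :=
  ∫ ω, (f ω - ∫ x, f x ∂P) * (g ω - ∫ x, g x ∂P) ∂P

/-- The centered sequence `X̃_i = X_i − E[X_0]`. -/
def centered {Ω : Type*} [MeasurableSpace Ω] (P : Measure Ω) (X : ℕ → Ω → ℝ) (i : ℕ) : Ω → ℝ :=
  fun ω => X i ω - ∫ x, X 0 x ∂P

/-- `ρ_1 = Cov(X_1, X_2)/σ²` (0-based: `Cov(X_0, X_1)/Var(X_0)`). -/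
def rho1 {Ω : Type*} [MeasurableSpace Ω] (P : Measure Ω) (X : ℕ → Ω → ℝ) : ℝ :=
  covar P (X 0) (X 1) / variance (X 0) P

/-- `τ_1² = Var(X̃_1X̃_2) + 2∑_{k≥2} Cov(X̃_1X̃_2, X̃_kX̃_{k+1})`. -/
def tau1sq {Ω : Type*} [MeasurableSpace Ω] (P : Measure Ω) (X : ℕ → Ω → ℝ) : ℝ :=
  variance (fun ω => centered P X 0 ω * centered P X 1 ω) P +
    2 * ∑' k : ℕ,
      covar P (fun ω => centered P X 0 ω * centered P X 1 ω)
        (fun ω => centered P X (k + 1) ω * centered P X (k + 2) ω)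

/-- `κ² = Var(X̃_1²) + 2∑_{k≥2} Cov(X̃_1², X̃_k²)`. -/
def kappa2 {Ω : Type*} [MeasurableSpace Ω] (P : Measure Ω) (X : ℕ → Ω → ℝ) : ℝ :=
  variance (fun ω => centered P X 0 ω ^ 2) P +
    2 * ∑' k : ℕ,
      covar P (fun ω => centered P X 0 ω ^ 2) (fun ω => centered P X (k + 1) ω ^ 2)

/-- `ν_1 = Cov(X̃_1X̃_2, X̃_1²) + ∑_{k≥2}[Cov(X̃_1², X̃_kX̃_{k+1}) + Cov(X̃_1X̃_2, X̃_k²)]`. -/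
def nu1 {Ω : Type*} [MeasurableSpace Ω] (P : Measure Ω) (X : ℕ → Ω → ℝ) : ℝ :=
  covar P (fun ω => centered P X 0 ω * centered P X 1 ω) (fun ω => centered P X 0 ω ^ 2) +
    ∑' k : ℕ,
      (covar P (fun ω => centered P X 0 ω ^ 2)
          (fun ω => centered P X (k + 1) ω * centered P X (k + 2) ω) +
        covar P (fun ω => centered P X 0 ω * centered P X 1 ω)
          (fun ω => centered P X (k + 1) ω ^ 2))

/-- `γ_1² = (τ_1² − 2ρ_1ν_1 + ρ_1²κ²)/σ⁴`. -/
def gamma1sq {Ω : Type*} [MeasurableSpace Ω] (P : Measure Ω) (X : ℕ → Ω → ℝ) : ℝ :=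
  (tau1sq P X - 2 * rho1 P X * nu1 P X + rho1 P X ^ 2 * kappa2 P X) / variance (X 0) P ^ 2

instance instMSPerm (n : ℕ) : MeasurableSpace (Equiv.Perm (Fin n)) := ⊤

/-- Uniform distribution on the symmetric group `S_n`. -/
def permMeasure (n : ℕ) : Measure (Equiv.Perm (Fin n)) :=
  (PMF.uniformOfFintype (Equiv.Perm (Fin n))).toMeasure

/-- `∑_{i=1}^{n−1} x_i x_{i+1}` (0-based). -/
def lagSum (n : ℕ) (x : ℕ → ℝ) : ℝ := ∑ i ∈ Finset.range (n - 1), x i * x (i + 1)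

/-- `Y_i = (x_i − x̄_n)(x_{i+1} − x̄_n)`. -/
def Yh (n : ℕ) (x : ℕ → ℝ) (i : ℕ) : ℝ :=
  (x i - sampleMean n x) * (x (i + 1) - sampleMean n x)

/-- `W_i = (x_i − x̄_n)²`. -/
def Wh (n : ℕ) (x : ℕ → ℝ) (i : ℕ) : ℝ := (x i - sampleMean n x) ^ 2

/-- `Ȳ_n = (1/(n−1)) ∑_{i=1}^{n−1} Y_i`. -/
def Ybar (n : ℕ) (x : ℕ → ℝ) : ℝ := (∑ i ∈ Finset.range (n - 1), Yh n x i) / ((n : ℝ) - 1)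

/-- `W̄_n = (1/n) ∑_{i=1}^{n} W_i`. -/
def Wbar (n : ℕ) (x : ℕ → ℝ) : ℝ := (∑ i ∈ Finset.range n, Wh n x i) / n

/-- The estimator `T̂_n²` with bandwidth `b`. -/
def That2 (n b : ℕ) (x : ℕ → ℝ) : ℝ :=
  (∑ i ∈ Finset.range (n - 1), (Yh n x i - Ybar n x) ^ 2) / n +
    (2 / n) * ∑ j ∈ Finset.Icc 1 b, ∑ i ∈ Finset.range (n - j - 1),
      (Yh n x i - Ybar n x) * (Yh n x (i + j) - Ybar n x)

/-- The estimator `K̂_n²` with bandwidth `b`. -/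
def Khat2 (n b : ℕ) (x : ℕ → ℝ) : ℝ :=
  (∑ i ∈ Finset.range n, (Wh n x i - Wbar n x) ^ 2) / n +
    (2 / n) * ∑ j ∈ Finset.Icc 1 b, ∑ i ∈ Finset.range (n - j),
      (Wh n x i - Wbar n x) * (Wh n x (i + j) - Wbar n x)

/-- The estimator `ν̂_n` with bandwidth `b`. -/
def nuHat (n b : ℕ) (x : ℕ → ℝ) : ℝ :=
  (∑ i ∈ Finset.range (n - 1), (Yh n x i - Ybar n x) * (Wh n x i - Wbar n x)) / n +
    (1 / n) * ∑ j ∈ Finset.Icc 1 b, ∑ i ∈ Finset.range (n - j - 1),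
      ((Yh n x i - Ybar n x) * (Wh n x (i + j) - Wbar n x) +
        (Wh n x i - Wbar n x) * (Yh n x (i + j) - Ybar n x))

/-- `σ̂_n² = (1/n) ∑_{i=1}^n (x_i − x̄_n)²`. -/
def sigmaHat2 (n : ℕ) (x : ℕ → ℝ) : ℝ :=
  (∑ i ∈ Finset.range n, (x i - sampleMean n x) ^ 2) / n

/-- The studentizing estimator `γ̂_n²`. -/
def gammaHat2 (n b : ℕ) (x : ℕ → ℝ) : ℝ :=
  (That2 n b x - 2 * rhoHat n x * nuHat n b x + rhoHat n x ^ 2 * Khat2 n b x) /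
    sigmaHat2 n x ^ 2

/-- The estimator `τ̂_n²` with bandwidth `b`. -/
def tauHat2 (n b : ℕ) (x : ℕ → ℝ) : ℝ :=
  (∑ i ∈ Finset.range n, (x i - sampleMean n x) ^ 2) / n +
    (2 / n) * ∑ j ∈ Finset.Icc 1 b, ∑ i ∈ Finset.range (n - j),
      (x i - sampleMean n x) * (x (i + j) - sampleMean n x)

open Topology

/-!
Choose, for each truncation level `N`, a time `M N` after which `G N n - g N` is uniformly small
in probability at the first `N` points of an enumeration of `ℚ`, and let `N_n` be the largest `N`
with `M 0, …, M N ≤ n`. Along this slowly growing diagonal `G (N_n) n → glim` in probability at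
every rational. Monotonicity in `t` squeezes `G (N_n) n t` between its values at rationals close
to `t` on either side, and continuity of `glim` transfers the convergence to every real `t`.
-/

theorem exists_monotone_tendsto_atTop_eventually (Q : ℕ → ℕ → Prop)
    (hQ : ∀ N, ∀ᶠ n in atTop, Q N n) :
    ∃ Ns : ℕ → ℕ, Monotone Ns ∧ Tendsto Ns atTop atTop ∧ ∀ᶠ n in atTop, Q (Ns n) n := by
  classical
  choose M hM using fun N => eventually_atTop.1 (hQ N)
  let Ns : ℕ → ℕ := fun n => Nat.findGreatest (fun N => ∀ j ≤ N, M j ≤ n) n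
  refine ⟨Ns, fun a b hab => Nat.findGreatest_mono (fun N h j hj => (h j hj).trans hab) hab,
    tendsto_atTop.2 fun N => ?_, ?_⟩
  · obtain ⟨n₀, hn₀⟩ := (eventually_ge_atTop N).and (eventually_all_finite (Set.finite_Iic N)
      |>.2 fun j _ => eventually_ge_atTop (M j)) |>.exists_forall_of_atTop
    exact eventually_atTop.2 ⟨n₀, fun n hn =>
      Nat.le_findGreatest (hn₀ n hn).1 fun j hj => (hn₀ n hn).2 j hj⟩
  · filter_upwards [eventually_ge_atTop (M 0)] with n hn
    have hspec : ∀ j ≤ Ns n, M j ≤ n := Nat.findGreatest_spec (P := fun N => ∀ j ≤ N, M j ≤ n)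
      (Nat.zero_le n) fun j hj => Nat.le_zero.1 hj ▸ hn
    exact hM _ n (hspec _ le_rfl)

section TendstoInProbability

variable {Ω : Type*} [MeasurableSpace Ω] {P : Measure Ω}

theorem TendstoInProbability.eventually_measure_le {Z : ℕ → Ω → ℝ} {c : ℝ}
    (h : TendstoInProbability P Z c) {ε : ℝ} (hε : 0 < ε) :
    ∀ᶠ n in atTop, P {ω | ε ≤ |Z n ω - c|} ≤ ENNReal.ofReal ε :=
  ((h ε hε).eventually_lt_const (ENNReal.ofReal_pos.2 hε)).mono fun _ hn => hn.le

theorem tendstoInProbability_of_eventually_measure_le {Z : ℕ → Ω → ℝ} {c : ℝ} {δ : ℕ → ℝ}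
    (hδ : Tendsto δ atTop (𝓝 0))
    (h : ∀ᶠ n in atTop, P {ω | δ n ≤ |Z n ω - c|} ≤ ENNReal.ofReal (δ n)) :
    TendstoInProbability P Z c := by
  intro ε hε
  have hbound : ∀ᶠ n in atTop, P {ω | ε ≤ |Z n ω - c|} ≤ ENNReal.ofReal (δ n) := by
    filter_upwards [h, hδ.eventually_le_const hε] with n hn hδn
    exact (measure_mono fun ω (hω : ε ≤ _) => hδn.trans hω).trans hn
  exact tendsto_of_tendsto_of_tendsto_of_le_of_le' tendsto_const_nhds
    (by simpa using ENNReal.tendsto_ofReal hδ) (Eventually.of_forall fun _ => zero_le) hbound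

theorem TendstoInProbability.of_sub {Z : ℕ → Ω → ℝ} {a : ℕ → ℝ} {c : ℝ}
    (h : TendstoInProbability P (fun n ω => Z n ω - a n) 0) (ha : Tendsto a atTop (𝓝 c)) :
    TendstoInProbability P Z c := by
  intro ε hε
  have hsub : ∀ᶠ n in atTop,
      P {ω | ε ≤ |Z n ω - c|} ≤ P {ω | ε / 2 ≤ |Z n ω - a n - 0|} := by
    filter_upwards [Metric.tendsto_nhds.1 ha (ε / 2) (half_pos hε)] with n hn
    refine measure_mono fun ω (hω : ε ≤ _) => ?_
    rw [Real.dist_eq] at hn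
    show ε / 2 ≤ |Z n ω - a n - 0|
    rw [sub_zero]
    linarith [abs_sub_le (Z n ω) (a n) c]
  exact tendsto_of_tendsto_of_tendsto_of_le_of_le' tendsto_const_nhds (h _ (half_pos hε))
    (Eventually.of_forall fun _ => zero_le) hsub

theorem exists_monotone_tendstoInProbability_diagonal {ι : Type*} [Countable ι]
    (Z : ℕ → ℕ → ι → Ω → ℝ) (h : ∀ N i, TendstoInProbability P (fun n => Z N n i) 0) :
    ∃ Ns : ℕ → ℕ, Monotone Ns ∧ Tendsto Ns atTop atTop ∧
      ∀ i, TendstoInProbability P (fun n => Z (Ns n) n i) 0 := by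
  obtain ⟨e, he⟩ := exists_injective_nat ι
  set δ : ℕ → ℝ := fun N => 1 / (N + 1)
  obtain ⟨Ns, hmono, htop, hdiag⟩ := exists_monotone_tendsto_atTop_eventually
    (fun N n => ∀ i ∈ e ⁻¹' Set.Iic N,
      P {ω | δ N ≤ |Z N n i ω - 0|} ≤ ENNReal.ofReal (δ N))
    fun N => (eventually_all_finite ((Set.finite_Iic N).preimage he.injOn)).2
      fun i _ => (h N i).eventually_measure_le (by positivity)
  refine ⟨Ns, hmono, htop, fun i => tendstoInProbability_of_eventually_measure_le
    (tendsto_one_div_add_atTop_nhds_zero_nat.comp htop) ?_⟩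
  filter_upwards [hdiag, htop.eventually_ge_atTop (e i)] with n hn hi
  exact hn i hi

theorem tendstoInProbability_of_monotone_of_dense {Y : ℕ → Ω → ℝ → ℝ} {f : ℝ → ℝ} {D : Set ℝ}
    (hD : Dense D) (hmono : ∀ n ω, Monotone (Y n ω)) {t : ℝ} (hf : ContinuousAt f t)
    (hY : ∀ d ∈ D, TendstoInProbability P (fun n ω => Y n ω d) (f d)) :
    TendstoInProbability P (fun n ω => Y n ω t) (f t) := by
  intro ε hε
  obtain ⟨δ, hδ, hfδ⟩ := Metric.continuousAt_iff.1 hf (ε / 2) (half_pos hε)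
  obtain ⟨d₁, hd₁D, hd₁⟩ := hD.exists_between (sub_lt_self t hδ)
  obtain ⟨d₂, hd₂D, hd₂⟩ := hD.exists_between (lt_add_of_pos_right t hδ)
  have hf₁ := abs_lt.1 <| hfδ (x := d₁) <| by
    rw [Real.dist_eq, abs_lt]; constructor <;> linarith [hd₁.1, hd₁.2]
  have hf₂ := abs_lt.1 <| hfδ (x := d₂) <| by
    rw [Real.dist_eq, abs_lt]; constructor <;> linarith [hd₂.1, hd₂.2]
  have hsub : ∀ n, {ω | ε ≤ |Y n ω t - f t|} ⊆
      {ω | ε / 2 ≤ |Y n ω d₁ - f d₁|} ∪ {ω | ε / 2 ≤ |Y n ω d₂ - f d₂|} := by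
    intro n ω (hω : ε ≤ _)
    have h₁ := hmono n ω hd₁.2.le
    have h₂ := hmono n ω hd₂.1.le
    rcases le_abs.1 hω with hω | hω
    · right
      show ε / 2 ≤ |Y n ω d₂ - f d₂|
      exact le_abs.2 (Or.inl (by linarith))
    · left
      show ε / 2 ≤ |Y n ω d₁ - f d₁|
      exact le_abs.2 (Or.inr (by linarith))
  refine tendsto_of_tendsto_of_tendsto_of_le_of_le tendsto_const_nhds
    (by simpa using (hY d₁ hd₁D _ (half_pos hε)).add (hY d₂ hd₂D _ (half_pos hε)))
    (fun _ => zero_le) fun n => (measure_mono (hsub n)).trans (measure_union_le _ _)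

end TendstoInProbability

theorem stmt13_general {Ω : Type*} [MeasurableSpace Ω] (P : Measure Ω)
    (G : ℕ → ℕ → Ω → ℝ → ℝ) (g : ℕ → ℝ → ℝ) (glim : ℝ → ℝ)
    (hmono : ∀ N n ω, Monotone (G N n ω))
    (hcont : Continuous glim)
    (hconv : ∀ N, ∀ t : ℝ, TendstoInProbability P (fun n ω => G N n ω t - g N t) 0)
    (hglim : ∀ t : ℝ, Filter.Tendsto (fun N => g N t) Filter.atTop (nhds (glim t))) :
    ∃ Ns : ℕ → ℕ, Monotone Ns ∧ Filter.Tendsto Ns Filter.atTop Filter.atTop ∧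
      ∀ t : ℝ, TendstoInProbability P (fun n ω => G (Ns n) n ω t) (glim t) := by
  obtain ⟨Ns, hNs, htop, hdiag⟩ := exists_monotone_tendstoInProbability_diagonal
    (fun N n (r : ℚ) ω => G N n ω r - g N r) fun N r => hconv N r
  refine ⟨Ns, hNs, htop, fun t => ?_⟩
  refine tendstoInProbability_of_monotone_of_dense Rat.denseRange_cast (fun n ω => hmono _ n ω)
    hcont.continuousAt ?_
  rintro _ ⟨r, rfl⟩
  exact (hdiag r).of_sub ((hglim r).comp htop)

/-- truncation diagonalization lemma for doubly-indexed random
nondecreasing functions. -/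
theorem stmt13 {Ω : Type*} [MeasurableSpace Ω] (P : Measure Ω) [IsProbabilityMeasure P]
    (G : ℕ → ℕ → Ω → ℝ → ℝ) (g : ℕ → ℝ → ℝ) (glim : ℝ → ℝ)
    (hmono : ∀ N n ω, Monotone (G N n ω))
    (hcont : Continuous glim)
    (hconv : ∀ N, ∀ t : ℝ, TendstoInProbability P (fun n ω => G N n ω t - g N t) 0)
    (hglim : ∀ t : ℝ, Filter.Tendsto (fun N => g N t) Filter.atTop (nhds (glim t))) :
    ∃ Ns : ℕ → ℕ, Monotone Ns ∧ Filter.Tendsto Ns Filter.atTop Filter.atTop ∧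
      ∀ t : ℝ, TendstoInProbability P (fun n ω => G (Ns n) n ω t) (glim t) :=
  stmt13_general P G g glim hmono hcont hconv hglim

end
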